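/- Let 𝔤 be a finite-dimensional Lie algebra over a field k whose Killing form κ is nondegenerate. Let 𝔭 ⊆ 𝔤 be a Lie subalgebra such that the orthogonal 𝔭^⊥ with respect to κ is a Lie subalgebra of 𝔤 all of whose elements are ad-nilpotent (so in particular 𝔭^⊥ is a nilpotent subalgebra). Then N_𝔤(𝔭^⊥) = 𝔭. -/

import Mathlib

/-!
By Engel's theorem `𝔮 = 𝔭^⊥` acts nilpotently on `𝔤`, so its lower central series on `𝔤` reaches
`0`. The terms of this series are stable under the normalizer of `𝔮` (in which `𝔮` is an ideal),
while `ad y` for `y ∈ 𝔮` moves each term one step down. Hence for `x` normalizing `𝔮` the map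
`ad x ∘ ad y` is nilpotent, so `κ x y = 0`: `x ∈ 𝔮^⊥ = 𝔭` by nondegeneracy. Conversely `𝔭`
normalizes `𝔭^⊥` by invariance of `κ`.
-/

open LieModule

namespace LieIdeal

variable {R L M : Type*} [CommRing R] [LieRing L] [LieAlgebra R L]
  [AddCommGroup M] [Module R M] [LieRingModule L M] [LieModule R L M]
  (I : LieIdeal R L)

lemma toEnd_comp_toEnd_pow_apply_mem_lcs {x y : L} (hy : y ∈ I) (n : ℕ) (m : M) :
    ((toEnd R L M x ∘ₗ toEnd R L M y) ^ n) m ∈ I.lcs M n := by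
  induction n with
  | zero => exact LieSubmodule.mem_top m
  | succ n ih =>
    rw [pow_succ', Module.End.mul_apply, lcs_succ]
    exact LieSubmodule.lie_mem _ (LieSubmodule.lie_mem_lie hy ih)

lemma traceForm_eq_zero_of_mem [IsReduced R] [IsNilpotent I M] {x y : L} (hy : y ∈ I) :
    traceForm R L M x y = 0 := by
  obtain ⟨n, hn⟩ := IsNilpotent.nilpotent R I M
  have hlcs : I.lcs M n = ⊥ := by
    rw [← LieSubmodule.toSubmodule_eq_bot, coe_lcs_eq, hn]; rfl
  have hnil : IsNilpotent (toEnd R L M x ∘ₗ toEnd R L M y) := by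
    refine ⟨n, LinearMap.ext fun m => ?_⟩
    simpa [hlcs] using I.toEnd_comp_toEnd_pow_apply_mem_lcs hy n m
  exact (LinearMap.isNilpotent_trace_of_isNilpotent hnil).eq_zero

end LieIdeal

namespace LieSubalgebra

lemma traceForm_lie_eq_zero_of_forall_traceForm_eq_zero {R L M : Type*}
    [CommRing R] [LieRing L] [LieAlgebra R L] [AddCommGroup M] [Module R M] [LieRingModule L M]
    [LieModule R L M] {p : LieSubalgebra R L} {x y : L} (hx : x ∈ p)
    (hy : ∀ z ∈ p, traceForm R L M y z = 0) (z : L) (hz : z ∈ p) :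
    traceForm R L M ⁅x, y⁆ z = 0 := by
  rw [← lie_skew, map_neg, LinearMap.neg_apply, traceForm_apply_lie_apply, hy _ (p.lie_mem hx hz),
    neg_zero]

variable {k L : Type*} [Field k] [LieRing L] [LieAlgebra k L] [FiniteDimensional k L]

lemma killingForm_eq_zero_of_mem_normalizer {H : LieSubalgebra k L}
    (hH : ∀ y ∈ H, IsNilpotent (LieAlgebra.ad k L y)) {x y : L} (hx : x ∈ H.normalizer)
    (hy : y ∈ H) : killingForm k L x y = 0 := by
  obtain ⟨I, hI⟩ := exists_nested_lieIdeal_ofLe_normalizer H.le_normalizer le_rfl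
  have hmem : ∀ z : H.normalizer, z ∈ I ↔ (z : L) ∈ H := fun z => by
    rw [← LieIdeal.mem_toLieSubalgebra, hI, mem_ofLe]
  have : IsNilpotent I L := by
    rw [isNilpotent_iff_forall' (R := k)]
    exact fun z => hH _ ((hmem z).1 z.2)
  exact I.traceForm_eq_zero_of_mem (x := ⟨x, hx⟩) (y := ⟨y, H.le_normalizer hy⟩) ((hmem _).2 hy)

end LieSubalgebra

/-- Let `𝔤` be a finite-dimensional Lie algebra over a field `k` whose Killing
form `κ` is nondegenerate.  Let `𝔭 ⊆ 𝔤` be a Lie subalgebra such that the orthogonal `𝔭^⊥`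
with respect to `κ` is a Lie subalgebra of `𝔤` (closed under the bracket) all of whose elements
are ad-nilpotent.  Then `N_𝔤(𝔭^⊥) = 𝔭`. -/
theorem normalizer_of_orthogonal_eq_self
    {k L : Type*} [Field k] [LieRing L] [LieAlgebra k L] [FiniteDimensional k L]
    (hnd : (killingForm k L).Nondegenerate)
    (p : LieSubalgebra k L)
    (hperp_sub : ∀ x y : L, (∀ z ∈ p, killingForm k L x z = 0) →
      (∀ z ∈ p, killingForm k L y z = 0) →
      ∀ z ∈ p, killingForm k L ⁅x, y⁆ z = 0)
    (hperp_nil : ∀ x : L, (∀ z ∈ p, killingForm k L x z = 0) →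
      IsNilpotent (LieAlgebra.ad k L x)) :
    ∀ x : L, (∀ y : L, (∀ z ∈ p, killingForm k L y z = 0) →
      ∀ z ∈ p, killingForm k L ⁅x, y⁆ z = 0) ↔ x ∈ p := by
  have hmem : ∀ y, y ∈ (killingForm k L).orthogonal p.toSubmodule ↔
      ∀ z ∈ p, killingForm k L y z = 0 := fun y =>
    forall₂_congr fun z _ => by rw [traceForm_comm]
  let Q : LieSubalgebra k L :=
    { toSubmodule := (killingForm k L).orthogonal p.toSubmodule
      lie_mem' := fun hx hy => (hmem _).2 (hperp_sub _ _ ((hmem _).1 hx) ((hmem _).1 hy)) }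
  intro x
  refine ⟨fun hx => ?_, fun hx y => p.traceForm_lie_eq_zero_of_forall_traceForm_eq_zero hx⟩
  have hxQ : x ∈ Q.normalizer :=
    (Q.mem_normalizer_iff x).2 fun y hy => (hmem _).2 (hx y ((hmem y).1 hy))
  have hx_perp : x ∈ (killingForm k L).orthogonal Q.toSubmodule := fun y hy =>
    (traceForm_comm k L L y x).trans <| Q.killingForm_eq_zero_of_mem_normalizer
      (fun y hy => hperp_nil y ((hmem y).1 hy)) hxQ hy
  rwa [LinearMap.BilinForm.orthogonal_orthogonal hnd (traceForm_isSymm k L L).isRefl] at hx_perp
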